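/- Let p be a prime number, let j be an integer with 0 < j < p, and let B ∈ U_𝔦 (for n = p). Then the F-subalgebra F[Π^j·B] of Mat_p(F) generated by the matrix Π^j·B is a field, and its dimension as an F-vector space equals p. -/

import Mathlib

/-!
Since `Π` normalises the Iwahori order (`𝔦 Π = Π 𝔦`) and `Π ^ p = ϖ`, choosing `k` with
`j k = 1 + p l` gives `(Π ^ j B) ^ k = ϖ ^ l • Π C` with `C ∈ 𝔦` and `det C` a unit. Then
`(Π C) ^ p ∈ ϖ 𝔦` is nilpotent modulo `𝔪` and `det (Π C) = ± ϖ det C`, so the characteristic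
polynomial of `Π C` is Eisenstein, hence irreducible over `F`, and `F[Π C]` is a field of degree
`p`. It lies in `F[Π ^ j B]`, which has dimension at most `p`, so the two coincide.
-/

open IsLocalRing

variable (R : Type*) [CommRing R] [IsDomain R] [IsDiscreteValuationRing R]

/-- The Iwahori order `𝔦`, as a set: matrices over `R` whose entries strictly below the
diagonal lie in the maximal ideal `𝔪`. -/
def iw (n : ℕ) : Set (Matrix (Fin n) (Fin n) R) :=
  {M | ∀ i j : Fin n, (j : ℕ) < (i : ℕ) → M i j ∈ maximalIdeal R}

/-- The unit group `U_𝔦` of the Iwahori order: matrices `u ∈ 𝔦` invertible with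
inverse in `𝔦`. -/
def Uiw (n : ℕ) : Set (Matrix (Fin n) (Fin n) R) :=
  {u | u ∈ iw R n ∧ ∃ v ∈ iw R n, u * v = 1 ∧ v * u = 1}

/-- The matrix `Π`, with `(i, i+1)`-entries `1`, `(n,1)`-entry `ϖ` and all other
entries `0`. -/
def PiMat (ϖ : R) (n : ℕ) : Matrix (Fin n) (Fin n) R :=
  Matrix.of fun i j => if (j : ℕ) = (i : ℕ) + 1 then 1
    else if (i : ℕ) = n - 1 ∧ (j : ℕ) = 0 then ϖ else 0

theorem exists_mul_eq_one_add_mul_of_prime {p j : ℕ} (hp : p.Prime) (hj0 : 0 < j) (hjp : j < p) :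
    ∃ k l, j * k = 1 + p * l := by
  have hcop : j.Coprime p := (Nat.coprime_of_lt_prime hj0.ne' hjp hp).symm
  obtain ⟨k, -, hk⟩ := Nat.exists_mul_mod_eq_one_of_coprime hcop hp.one_lt
  exact ⟨k, j * k / p, by rw [← hk, add_comm, Nat.div_add_mod]⟩

section Charpoly

open Polynomial

variable {S : Type*} [CommRing S] {ι : Type*} [Fintype ι] [DecidableEq ι]

theorem Matrix.charpoly_isEisensteinAt {P : Ideal S} [P.IsPrime] {M : Matrix ι ι S}
    (hM : IsNilpotent (M.map (Ideal.Quotient.mk P))) (hdet : M.det ∉ P ^ 2) :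
    M.charpoly.IsEisensteinAt P := by
  have hred : M.charpoly.map (Ideal.Quotient.mk P) = X ^ Fintype.card ι := by
    rw [← Matrix.charpoly_map, ← sub_eq_zero]
    exact (Matrix.isNilpotent_charpoly_sub_pow_of_isNilpotent hM).eq_zero
  refine ⟨?_, fun {d} hd => ?_, fun h => hdet ?_⟩
  · rw [M.charpoly_monic.leadingCoeff]
    exact Ideal.IsPrime.one_notMem ‹_›
  · nontriviality S
    rw [Matrix.charpoly_natDegree_eq_dim] at hd
    rw [← Ideal.Quotient.eq_zero_iff_mem, ← coeff_map, hred, coeff_X_pow, if_neg hd.ne]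
  · rw [Matrix.det_eq_sign_charpoly_coeff]
    exact Ideal.mul_mem_left _ _ h

theorem Matrix.irreducible_charpoly_map_of_isEisensteinAt [IsDomain S] [IsIntegrallyClosed S]
    {K : Type*} [Field K] [Algebra S K] [IsFractionRing S K] [Nonempty ι]
    {P : Ideal S} [P.IsPrime] {M : Matrix ι ι S} (hM : M.charpoly.IsEisensteinAt P) :
    Irreducible (M.map (algebraMap S K)).charpoly := by
  rw [Matrix.charpoly_map, ← M.charpoly_monic.irreducible_iff_irreducible_map_fraction_map]
  exact hM.irreducible ‹_› M.charpoly_monic.isPrimitive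
    (by rw [Matrix.charpoly_natDegree_eq_dim]; exact Fintype.card_pos)

end Charpoly

section AdjoinSingleton

open Polynomial

variable (K : Type*) [Field K] {A : Type*} [Ring A] [Algebra K A]

noncomputable def adjoinRootMinpolyEquivAdjoin (x : A) :
    AdjoinRoot (minpoly K x) ≃ₐ[K] Algebra.adjoin K {x} :=
  ((Ideal.quotientEquivAlgOfEq K (minpoly.ker_aeval_eq_span_minpoly K x).symm).trans
    (Ideal.quotientKerEquivRange (aeval (R := K) x))).trans
      (Subalgebra.equivOfEq _ _ (Algebra.adjoin_singleton_eq_range_aeval K x).symm)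

variable {K}

theorem finrank_adjoin_singleton {x : A} (hx : IsIntegral K x) :
    Module.finrank K (Algebra.adjoin K {x}) = (minpoly K x).natDegree := by
  rw [← (adjoinRootMinpolyEquivAdjoin K x).toLinearEquiv.finrank_eq,
    (AdjoinRoot.powerBasis (minpoly.ne_zero hx)).finrank, AdjoinRoot.powerBasis_dim]

theorem isField_adjoin_singleton {x : A} (hx : Irreducible (minpoly K x)) :
    IsField (Algebra.adjoin K {x}) :=
  have : Fact (Irreducible (minpoly K x)) := ⟨hx⟩
  (adjoinRootMinpolyEquivAdjoin K x).symm.toMulEquiv.isField (Field.toIsField _)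

theorem mem_adjoin_singleton_of_pow_eq_smul {x y : A} {k : ℕ} {c : K} (hc : c ≠ 0)
    (h : x ^ k = c • y) : y ∈ Algebra.adjoin K {x} := by
  rw [← inv_smul_smul₀ hc y, ← h]
  exact Subalgebra.smul_mem _ (pow_mem (Algebra.self_mem_adjoin_singleton K x) k) _

end AdjoinSingleton

section MatrixAdjoin

variable {K : Type*} [Field K] {ι : Type*} [Fintype ι] [DecidableEq ι]

theorem Matrix.finrank_adjoin_le_card (M : Matrix ι ι K) :
    Module.finrank K (Algebra.adjoin K {M}) ≤ Fintype.card ι := by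
  rw [finrank_adjoin_singleton (Matrix.isIntegral M), ← M.charpoly_natDegree_eq_dim]
  exact Polynomial.natDegree_le_of_dvd M.minpoly_dvd_charpoly M.charpoly_monic.ne_zero

theorem Matrix.isField_adjoin_of_irreducible_charpoly [Nonempty ι] {M : Matrix ι ι K}
    (hM : Irreducible M.charpoly) :
    IsField (Algebra.adjoin K {M}) ∧ Module.finrank K (Algebra.adjoin K {M}) = Fintype.card ι := by
  have hmin : minpoly K M = M.charpoly :=
    (minpoly.eq_of_irreducible_of_monic hM M.aeval_self_charpoly M.charpoly_monic).symm
  refine ⟨isField_adjoin_singleton (hmin ▸ hM), ?_⟩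
  rw [finrank_adjoin_singleton (Matrix.isIntegral M), hmin, M.charpoly_natDegree_eq_dim]

end MatrixAdjoin

theorem Fin.add_one_eq_zero_iff {m : ℕ} (i : Fin (m + 1)) : i + 1 = 0 ↔ i = Fin.last m := by
  rw [← Fin.last_add_one, add_left_inj]

theorem Fin.sub_one_eq_last_iff {m : ℕ} (i : Fin (m + 1)) : i - 1 = Fin.last m ↔ i = 0 := by
  rw [sub_eq_iff_eq_add, Fin.last_add_one]

section PiMat

open Fin.NatCast

variable {S : Type*} [CommRing S] (ϖ : S) {m : ℕ}

theorem piMat_apply (i k : Fin (m + 1)) :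
    PiMat S ϖ (m + 1) i k = if k = i + 1 then (if i = Fin.last m then ϖ else 1) else 0 := by
  have hk := k.isLt
  simp only [PiMat, Matrix.of_apply, Fin.ext_iff, Fin.val_add_one, Fin.val_last,
    Nat.add_sub_cancel]
  split_ifs <;> first | rfl | omega

theorem piMat_mul_apply (M : Matrix (Fin (m + 1)) (Fin (m + 1)) S) (i k : Fin (m + 1)) :
    (PiMat S ϖ (m + 1) * M) i k = (if i = Fin.last m then ϖ else 1) * M (i + 1) k := by
  simp [Matrix.mul_apply, piMat_apply, ite_mul]

theorem mul_piMat_apply (M : Matrix (Fin (m + 1)) (Fin (m + 1)) S) (i k : Fin (m + 1)) :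
    (M * PiMat S ϖ (m + 1)) i k = M i (k - 1) * (if k = 0 then ϖ else 1) := by
  simp [Matrix.mul_apply, piMat_apply, mul_ite, ← sub_eq_iff_eq_add, Fin.sub_one_eq_last_iff]

theorem piMat_pow_mul_apply (t : ℕ) (M : Matrix (Fin (m + 1)) (Fin (m + 1)) S)
    (i k : Fin (m + 1)) :
    (PiMat S ϖ (m + 1) ^ t * M) i k =
      (∏ s ∈ Finset.range t, if i + s = Fin.last m then ϖ else 1) * M (i + t) k := by
  induction t generalizing M with
  | zero => simp
  | succ t ih =>
    rw [pow_succ, mul_assoc, ih, piMat_mul_apply, Finset.prod_range_succ, Nat.cast_succ, add_assoc,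
      mul_assoc]

theorem piMat_pow_eq_smul_one : PiMat S ϖ (m + 1) ^ (m + 1) = ϖ • 1 := by
  ext i k
  have key := piMat_pow_mul_apply ϖ (m + 1) 1 i k
  rw [mul_one, Fin.natCast_self, add_zero] at key
  rw [key, ← Fin.prod_univ_eq_prod_range (fun s => if i + s = Fin.last m then ϖ else 1)]
  simp only [Fin.cast_val_eq_self]
  have orbit : (∏ s, if i + s = Fin.last m then ϖ else 1) = ϖ := by
    rw [Fintype.prod_equiv (Equiv.addLeft i) (fun s => if i + s = Fin.last m then ϖ else 1)
      (fun s => if s = Fin.last m then ϖ else 1) fun _ => rfl]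
    simp
  rw [orbit, Matrix.smul_apply, smul_eq_mul]

theorem det_piMat : (PiMat S ϖ (m + 1)).det = (-1) ^ m * ϖ := by
  have : PiMat S ϖ (m + 1) = Matrix.diagonal (fun i => if i = Fin.last m then ϖ else 1) *
      (finRotate (m + 1)).permMatrix S := by
    ext i k
    simp [piMat_apply, Matrix.diagonal_mul, Equiv.Perm.permMatrix, PEquiv.toMatrix_apply, eq_comm]
  rw [this, Matrix.det_mul, Matrix.det_diagonal, Matrix.det_permutation, sign_finRotate]
  simp [mul_comm]

theorem exists_piMat_mul_eq (N : Matrix (Fin (m + 1)) (Fin (m + 1)) S)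
    (hN : ∀ k, ϖ ∣ N (Fin.last m) k) : ∃ C, PiMat S ϖ (m + 1) * C = N := by
  choose c hc using hN
  refine ⟨Matrix.of fun i k => if i = 0 then c k else N (i - 1) k, ?_⟩
  ext i k
  by_cases hi : i = Fin.last m
  · simp [piMat_mul_apply, hi, hc]
  · simp [piMat_mul_apply, hi, Fin.add_one_eq_zero_iff]

end PiMat

section Iwahori

variable {R} {m : ℕ} {ϖ : R}

theorem one_mem_iw {n : ℕ} : (1 : Matrix (Fin n) (Fin n) R) ∈ iw R n := fun i j hij => by
  rw [Matrix.one_apply_ne (fun h => by subst h; omega)]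
  exact zero_mem _

theorem mul_mem_iw {n : ℕ} {M N : Matrix (Fin n) (Fin n) R} (hM : M ∈ iw R n) (hN : N ∈ iw R n) :
    M * N ∈ iw R n := fun i j hij => by
  rw [Matrix.mul_apply]
  refine Ideal.sum_mem _ fun l _ => ?_
  by_cases h : (l : ℕ) < i
  · exact Ideal.mul_mem_right _ _ (hM i l h)
  · exact Ideal.mul_mem_left _ _ (hN l j (by omega))

theorem exists_mul_piMat_eq_piMat_mul (hϖ : Ideal.span {ϖ} = maximalIdeal R)
    {M : Matrix (Fin (m + 1)) (Fin (m + 1)) R} (hM : M ∈ iw R (m + 1)) :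
    ∃ C ∈ iw R (m + 1), M * PiMat R ϖ (m + 1) = PiMat R ϖ (m + 1) * C := by
  have hϖ𝔪 : ϖ ∈ maximalIdeal R := hϖ ▸ Ideal.mem_span_singleton_self ϖ
  have hlast : ∀ k, ϖ ∣ (M * PiMat R ϖ (m + 1)) (Fin.last m) k := fun k => by
    rw [mul_piMat_apply]
    by_cases hk : k = 0
    · simp [hk]
    · have hlt : ((k - 1 : Fin (m + 1)) : ℕ) < Fin.last m := by
        rw [Fin.val_sub_one_of_ne_zero hk, Fin.val_last]
        omega
      simpa [hk, ← hϖ, Ideal.mem_span_singleton] using hM _ _ hlt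
  obtain ⟨C, hC⟩ := exists_piMat_mul_eq ϖ _ hlast
  refine ⟨C, fun i k hki => ?_, hC.symm⟩
  have hi : i ≠ 0 := by rintro rfl; simp at hki
  have hCi : C i k = (M * PiMat R ϖ (m + 1)) (i - 1) k := by
    rw [← hC, piMat_mul_apply, if_neg (by rwa [Fin.sub_one_eq_last_iff]), one_mul, sub_add_cancel]
  rw [hCi, mul_piMat_apply]
  by_cases hk : k = 0
  · simpa [hk] using Ideal.mul_mem_left _ _ hϖ𝔪
  · have hlt : ((k - 1 : Fin (m + 1)) : ℕ) < (i - 1 : Fin (m + 1)) := by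
      rw [Fin.val_sub_one_of_ne_zero hi, Fin.val_sub_one_of_ne_zero hk]
      have := Fin.pos_iff_ne_zero.mpr hk
      omega
    simpa [hk] using hM _ _ hlt

theorem exists_mul_piMat_pow_eq_piMat_pow_mul (hϖ : Ideal.span {ϖ} = maximalIdeal R)
    {M : Matrix (Fin (m + 1)) (Fin (m + 1)) R} (hM : M ∈ iw R (m + 1)) (t : ℕ) :
    ∃ C ∈ iw R (m + 1), M * PiMat R ϖ (m + 1) ^ t = PiMat R ϖ (m + 1) ^ t * C := by
  induction t with
  | zero => exact ⟨M, hM, by simp⟩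
  | succ t ih =>
    obtain ⟨C, hC, hMC⟩ := ih
    obtain ⟨D, hD, hCD⟩ := exists_mul_piMat_eq_piMat_mul hϖ hC
    exact ⟨D, hD, by rw [pow_succ, ← mul_assoc, hMC, mul_assoc, hCD, mul_assoc]⟩

theorem exists_pow_piMat_pow_mul_eq (hϖ : Ideal.span {ϖ} = maximalIdeal R)
    {B : Matrix (Fin (m + 1)) (Fin (m + 1)) R} (hB : B ∈ iw R (m + 1)) (j k : ℕ) :
    ∃ C ∈ iw R (m + 1), (PiMat R ϖ (m + 1) ^ j * B) ^ k = PiMat R ϖ (m + 1) ^ (j * k) * C := by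
  induction k with
  | zero => exact ⟨1, one_mem_iw, by simp⟩
  | succ k ih =>
    obtain ⟨C, hC, hpow⟩ := ih
    obtain ⟨D, hD, hCD⟩ := exists_mul_piMat_pow_eq_piMat_pow_mul hϖ hC j
    refine ⟨D * B, mul_mem_iw hD hB, ?_⟩
    rw [pow_succ, hpow, mul_assoc, ← mul_assoc C, hCD, Nat.mul_succ, pow_add]
    simp only [mul_assoc]

end Iwahori

section Uniformizer

variable {R} {m : ℕ} {ϖ : R}

theorem notMem_maximalIdeal_sq_of_associated (hϖ : Ideal.span {ϖ} = maximalIdeal R) {x : R}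
    (hx : Associated ϖ x) : x ∉ maximalIdeal R ^ 2 := by
  have hirr : Irreducible ϖ := (IsDiscreteValuationRing.irreducible_iff_uniformizer ϖ).mpr hϖ.symm
  rw [← hϖ, Ideal.span_singleton_pow, Ideal.mem_span_singleton, ← hx.dvd_iff_dvd_right]
  intro h
  have := (pow_dvd_pow_iff (n := 2) (m := 1) hirr.ne_zero hirr.not_isUnit).mp (by rwa [pow_one])
  omega

theorem charpoly_piMat_mul_isEisensteinAt (hϖ : Ideal.span {ϖ} = maximalIdeal R)
    {C : Matrix (Fin (m + 1)) (Fin (m + 1)) R} (hC : C ∈ iw R (m + 1)) (hCdet : IsUnit C.det) :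
    (PiMat R ϖ (m + 1) * C).charpoly.IsEisensteinAt (maximalIdeal R) := by
  refine Matrix.charpoly_isEisensteinAt ⟨m + 1, ?_⟩ ?_
  · obtain ⟨D, -, hD⟩ := exists_pow_piMat_pow_mul_eq hϖ hC 1 (m + 1)
    rw [pow_one, one_mul, piMat_pow_eq_smul_one, smul_mul_assoc, one_mul] at hD
    rw [← Matrix.map_pow, hD]
    ext i k
    simpa using .inl (Ideal.Quotient.eq_zero_iff_mem.mpr (hϖ ▸ Ideal.mem_span_singleton_self ϖ))
  · apply notMem_maximalIdeal_sq_of_associated hϖ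
    rw [Matrix.det_mul, det_piMat]
    exact (associated_unit_mul_left ϖ _ (isUnit_one.neg.pow m)).symm.trans
      (associated_mul_unit_right _ _ hCdet)

theorem exists_pow_piMat_pow_mul_eq_smul (hϖ : Ideal.span {ϖ} = maximalIdeal R)
    {B : Matrix (Fin (m + 1)) (Fin (m + 1)) R} (hB : B ∈ Uiw R (m + 1)) {j k l : ℕ}
    (hjk : j * k = 1 + (m + 1) * l) :
    ∃ C ∈ iw R (m + 1), IsUnit C.det ∧
      (PiMat R ϖ (m + 1) ^ j * B) ^ k = ϖ ^ l • (PiMat R ϖ (m + 1) * C) := by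
  obtain ⟨C, hC, hpow⟩ := exists_pow_piMat_pow_mul_eq hϖ hB.1 j k
  have hdetPi : (PiMat R ϖ (m + 1)).det ≠ 0 := by
    rw [det_piMat]
    exact mul_ne_zero (pow_ne_zero _ (neg_ne_zero.mpr one_ne_zero))
      ((IsDiscreteValuationRing.irreducible_iff_uniformizer ϖ).mpr hϖ.symm).ne_zero
  refine ⟨C, hC, ?_, ?_⟩
  · have := congrArg Matrix.det hpow
    simp only [Matrix.det_pow, Matrix.det_mul, mul_pow, ← pow_mul] at this
    rw [mul_left_cancel₀ (pow_ne_zero _ hdetPi) this.symm]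
    obtain ⟨V, -, hBV, -⟩ := hB.2
    exact (Matrix.isUnit_det_of_right_inverse hBV).pow k
  · rw [hpow, hjk, pow_add, pow_one, pow_mul, piMat_pow_eq_smul_one, smul_pow, one_pow]
    simp

end Uniformizer

variable (F : Type*) [Field F] [Algebra R F] [IsFractionRing R F]

/-- For `p` prime, `0 < j < p` and `B ∈ U_𝔦`, the `F`-subalgebra
`F[Π^j·B]` of `Mat_p(F)` is a field of `F`-dimension `p`. -/
theorem adjoin_piPow_mul_isField (ϖ : R) (hϖ : Ideal.span {ϖ} = maximalIdeal R)
    (p : ℕ) (hp : p.Prime) (j : ℕ) (hj0 : 0 < j) (hjp : j < p)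
    (B : Matrix (Fin p) (Fin p) R) (hB : B ∈ Uiw R p) :
    IsField (Algebra.adjoin F {((PiMat R ϖ p) ^ j * B).map (algebraMap R F)}) ∧
    Module.finrank F
      (Algebra.adjoin F {((PiMat R ϖ p) ^ j * B).map (algebraMap R F)}) = p := by
  obtain ⟨m, rfl⟩ := Nat.exists_eq_add_one_of_ne_zero hp.ne_zero
  obtain ⟨k, l, hjk⟩ := exists_mul_eq_one_add_mul_of_prime hp hj0 hjp
  obtain ⟨C, hC, hCdet, hpow⟩ := exists_pow_piMat_pow_mul_eq_smul hϖ hB hjk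
  set x := ((PiMat R ϖ (m + 1)) ^ j * B).map (algebraMap R F)
  set y := (PiMat R ϖ (m + 1) * C).map (algebraMap R F)
  have hy : IsField (Algebra.adjoin F {y}) ∧ Module.finrank F (Algebra.adjoin F {y}) = m + 1 := by
    simpa using Matrix.isField_adjoin_of_irreducible_charpoly
      (Matrix.irreducible_charpoly_map_of_isEisensteinAt (K := F)
        (charpoly_piMat_mul_isEisensteinAt hϖ hC hCdet))
  have hxk : x ^ k = algebraMap R F ϖ ^ l • y := by
    rw [← Matrix.map_pow, hpow]
    ext
    simp only [y, Matrix.map_apply, Matrix.smul_apply, smul_eq_mul, map_mul, map_pow]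
  have hϖ0 : algebraMap R F ϖ ^ l ≠ 0 := pow_ne_zero _ <|
    (map_ne_zero_iff _ (IsFractionRing.injective R F)).mpr
      ((IsDiscreteValuationRing.irreducible_iff_uniformizer ϖ).mpr hϖ.symm).ne_zero
  have heq : Algebra.adjoin F {y} = Algebra.adjoin F {x} :=
    Subalgebra.eq_of_le_of_finrank_le
      (Algebra.adjoin_le (Set.singleton_subset_iff.2 (mem_adjoin_singleton_of_pow_eq_smul hϖ0 hxk)))
      (by rw [hy.2]; exact x.finrank_adjoin_le_card.trans_eq (Fintype.card_fin _))
  rwa [← heq]
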